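/- Suppose a = 0. Then the system (E0)–(Ek) holds on U: (E0) f_0'g − f_0·g' + 2f_0 = 0; (E1) f_1'g + f_1 = 0; (E2) −g'' + f_2'g + f_2·g' = 0; (Ek) f_k'g + (k−1)f_k·g' + (2−k)f_k = 0 for 3 ≤ k ≤ n−1, if and only if there exist real constants b_0', …, b_n' such that for all u ∈ U: f_k(u) = b_k'·|F(u)|^{(k−n)/(n−2)}·(F'(u))^{k−1} for each 0 ≤ k ≤ n with k ≠ 2, and f_2(u) = b_2'·F'(u)/F(u) − F''(u)/F'(u). -/

import Mathlib

/-!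
With `c = (n-2)/(n-1)` we have `g = c F/F'` and `g' = c (F'^2 - F F'')/F'^2`. For every `k`,
the integrating factor `φ_k = |F|^{(n-k)/(n-2)} F'^{1-k}` satisfies
`g φ_k'/φ_k = (k-1) g' + 2 - k`, so `φ_k (E_k) = g (f_k φ_k)'`; since `g ≠ 0`, `(E_k)` says that
`f_k φ_k` is constant on the interval `U`. Equation `(E_2)` reads `(f_2 g - g')' = 0`, and
`f_2 g - g' = c (b - 1)` solves to `f_2 = b F'/F - F''/F'`. Finally `f_n`, continuous and
nonvanishing on `U`, is `±|f_n| = ±F'^{n-1}`.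
-/

/-- The function `g = ((n−2)F)/((n−1)F')`. -/
noncomputable def gFun (n : ℕ) (F : ℝ → ℝ) (u : ℝ) : ℝ :=
  (((n : ℝ) - 2) * F u) / (((n : ℝ) - 1) * deriv F u)

open Filter

theorem IsOpen.forall_deriv_eq_zero_iff_exists_const {𝕜 G : Type*} [RCLike 𝕜]
    [NormedAddCommGroup G] [NormedSpace 𝕜 G] {f : 𝕜 → G} {s : Set 𝕜}
    (hs : IsOpen s) (hs' : IsPreconnected s) (hf : DifferentiableOn 𝕜 f s) :
    (∀ x ∈ s, deriv f x = 0) ↔ ∃ a, ∀ x ∈ s, f x = a := by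
  refine ⟨fun h => hs.exists_is_const_of_deriv_eq_zero hs' hf h, ?_⟩
  rintro ⟨a, ha⟩ x hx
  rw [(eventuallyEq_of_mem (hs.mem_nhds hx) ha).deriv_eq, deriv_const]

theorem IsPreconnected.exists_eq_mul_abs {α : Type*} [TopologicalSpace α] {s : Set α}
    {f : α → ℝ} (hs : IsPreconnected s) (hf : ContinuousOn f s) (h0 : ∀ x ∈ s, f x ≠ 0) :
    ∃ b : ℝ, ∀ x ∈ s, f x = b * |f x| := by
  rcases hs.eq_or_eq_neg_of_sq_eq hf hf.abs (fun x _ => by simp [sq_abs])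
    (fun hx => abs_ne_zero.2 (h0 _ hx)) with h | h
  · exact ⟨1, fun x hx => by rw [one_mul]; exact h hx⟩
  · exact ⟨-1, fun x hx => by rw [neg_one_mul]; exact h hx⟩

theorem HasDerivAt.abs_rpow_const {F : ℝ → ℝ} {Q u : ℝ} (hF : HasDerivAt F Q u)
    (hu : F u ≠ 0) (a : ℝ) :
    HasDerivAt (fun x => |F x| ^ a) (a * |F u| ^ a * Q / F u) u := by
  have h := ((hasDerivAt_abs hu).comp u hF).rpow_const (p := a) (Or.inl (abs_ne_zero.2 hu))
  refine h.congr_deriv ?_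
  simp only [Function.comp_apply]
  rw [Real.rpow_sub_one (abs_ne_zero.2 hu)]
  rcases hu.lt_or_gt with h | h
  · simp only [h, sign_neg, SignType.coe_neg, SignType.coe_one, neg_mul, one_mul, abs_of_neg h]
    field_simp
  · simp only [h, sign_pos, SignType.coe_one, one_mul, abs_of_pos h]
    field_simp

noncomputable def integratingFactor (n k : ℕ) (F : ℝ → ℝ) (x : ℝ) : ℝ :=
  |F x| ^ (((n : ℝ) - k) / ((n : ℝ) - 2)) * deriv F x ^ (1 - (k : ℤ))

section Pointwise

variable {n : ℕ} {F : ℝ → ℝ} {u : ℝ}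

theorem gFun_eq_mul_div (n : ℕ) (F : ℝ → ℝ) :
    gFun n F = fun x => ((n : ℝ) - 2) / ((n : ℝ) - 1) * (F x / deriv F x) := by
  funext x
  exact mul_div_mul_comm _ _ _ _

theorem hasDerivAt_gFun (n : ℕ) (hF : DifferentiableAt ℝ F u)
    (hF' : DifferentiableAt ℝ (deriv F) u) (hQ : deriv F u ≠ 0) :
    HasDerivAt (gFun n F) (((n : ℝ) - 2) / ((n : ℝ) - 1) *
      ((deriv F u * deriv F u - F u * deriv (deriv F) u) / deriv F u ^ 2)) u := by
  rw [gFun_eq_mul_div]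
  exact (hF.hasDerivAt.div hF'.hasDerivAt hQ).const_mul _

theorem hasDerivAt_integratingFactor (n k : ℕ) (hF : DifferentiableAt ℝ F u)
    (hF' : DifferentiableAt ℝ (deriv F) u) (h0 : F u ≠ 0) (hQ : deriv F u ≠ 0) :
    HasDerivAt (integratingFactor n k F) (integratingFactor n k F u *
      (((n : ℝ) - k) / ((n : ℝ) - 2) * deriv F u / F u
        + (1 - (k : ℝ)) * deriv (deriv F) u / deriv F u)) u := by
  have hpow := (hasDerivAt_zpow (1 - (k : ℤ)) _ (Or.inl hQ)).comp u hF'.hasDerivAt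
  refine ((hF.hasDerivAt.abs_rpow_const h0 _).mul hpow).congr_deriv ?_
  rw [integratingFactor, Function.comp_apply, zpow_sub_one₀ hQ]
  push_cast
  field_simp

theorem gFun_mul_deriv_mul_integratingFactor (k : ℕ) (hn1 : (n : ℝ) ≠ 1) (hn2 : (n : ℝ) ≠ 2)
    {f : ℝ → ℝ} (hf : DifferentiableAt ℝ f u) (hF : DifferentiableAt ℝ F u)
    (hF' : DifferentiableAt ℝ (deriv F) u) (h0 : F u ≠ 0) (hQ : deriv F u ≠ 0) :
    gFun n F u * deriv (fun x => f x * integratingFactor n k F x) u =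
      integratingFactor n k F u * (deriv f u * gFun n F u
        + ((k : ℝ) - 1) * f u * deriv (gFun n F) u + (2 - (k : ℝ)) * f u) := by
  have hφ := hasDerivAt_integratingFactor n k hF hF' h0 hQ
  rw [deriv_fun_mul hf hφ.differentiableAt, hφ.deriv, (hasDerivAt_gFun n hF hF' hQ).deriv, gFun]
  have hn1' : (n : ℝ) - 1 ≠ 0 := sub_ne_zero.2 hn1
  have hn2' : (n : ℝ) - 2 ≠ 0 := sub_ne_zero.2 hn2
  field_simp
  ring

theorem mul_gFun_sub_deriv_gFun_eq_iff (hn1 : (n : ℝ) ≠ 1) (hn2 : (n : ℝ) ≠ 2)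
    (hF : DifferentiableAt ℝ F u) (hF' : DifferentiableAt ℝ (deriv F) u) (h0 : F u ≠ 0)
    (hQ : deriv F u ≠ 0) (x b : ℝ) :
    x * gFun n F u - deriv (gFun n F) u = ((n : ℝ) - 2) / ((n : ℝ) - 1) * (b - 1) ↔
      x = b * deriv F u / F u - deriv (deriv F) u / deriv F u := by
  rw [(hasDerivAt_gFun n hF hF' hQ).deriv, gFun]
  have hn1' : (n : ℝ) - 1 ≠ 0 := sub_ne_zero.2 hn1
  have hn2' : (n : ℝ) - 2 ≠ 0 := sub_ne_zero.2 hn2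
  field_simp
  constructor <;> intro h <;> linear_combination h

theorem integratingFactor_ne_zero (n k : ℕ) (h0 : F u ≠ 0) (hQ : deriv F u ≠ 0) :
    integratingFactor n k F u ≠ 0 :=
  mul_ne_zero (Real.rpow_pos_of_pos (abs_pos.2 h0) _).ne' (zpow_ne_zero _ hQ)

theorem inv_integratingFactor (n k : ℕ) (F : ℝ → ℝ) (u : ℝ) :
    (integratingFactor n k F u)⁻¹ =
      |F u| ^ (((k : ℝ) - n) / ((n : ℝ) - 2)) * deriv F u ^ ((k : ℤ) - 1) := by
  rw [integratingFactor, mul_inv, ← Real.rpow_neg (abs_nonneg _), ← zpow_neg, ← neg_div, neg_sub,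
    neg_sub]

end Pointwise

section OnOpenSet

variable {n : ℕ} {F f : ℝ → ℝ} {U : Set ℝ}

theorem ode_iff_exists_eq_mul (k : ℕ) (hU : IsOpen U) (hUc : IsPreconnected U)
    (hn1 : (n : ℝ) ≠ 1) (hn2 : (n : ℝ) ≠ 2) (hf : ∀ u ∈ U, DifferentiableAt ℝ f u)
    (hF : ∀ u ∈ U, DifferentiableAt ℝ F u) (hF' : ∀ u ∈ U, DifferentiableAt ℝ (deriv F) u)
    (h0 : ∀ u ∈ U, F u ≠ 0) (hQ : ∀ u ∈ U, deriv F u ≠ 0) :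
    (∀ u ∈ U, deriv f u * gFun n F u + ((k : ℝ) - 1) * f u * deriv (gFun n F) u
        + (2 - (k : ℝ)) * f u = 0) ↔
      ∃ b : ℝ, ∀ u ∈ U,
        f u = b * |F u| ^ (((k : ℝ) - n) / ((n : ℝ) - 2)) * deriv F u ^ ((k : ℤ) - 1) := by
  have hg0 : ∀ u ∈ U, gFun n F u ≠ 0 := fun u hu =>
    div_ne_zero (mul_ne_zero (sub_ne_zero.2 hn2) (h0 u hu))
      (mul_ne_zero (sub_ne_zero.2 hn1) (hQ u hu))
  have hdiff : DifferentiableOn ℝ (fun x => f x * integratingFactor n k F x) U := fun u hu =>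
    ((hf u hu).fun_mul (hasDerivAt_integratingFactor n k (hF u hu) (hF' u hu) (h0 u hu)
      (hQ u hu)).differentiableAt).differentiableWithinAt
  calc _ ↔ ∀ u ∈ U, deriv (fun x => f x * integratingFactor n k F x) u = 0 :=
        forall₂_congr fun u hu => by
          rw [← mul_eq_zero_iff_left (integratingFactor_ne_zero n k (h0 u hu) (hQ u hu)),
            ← gFun_mul_deriv_mul_integratingFactor k hn1 hn2 (hf u hu) (hF u hu) (hF' u hu)
              (h0 u hu) (hQ u hu), mul_eq_zero_iff_left (hg0 u hu)]
    _ ↔ ∃ b, ∀ u ∈ U, f u * integratingFactor n k F u = b :=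
        hU.forall_deriv_eq_zero_iff_exists_const hUc hdiff
    _ ↔ _ := exists_congr fun b => forall₂_congr fun u hu => by
        rw [mul_assoc, ← inv_integratingFactor, ← div_eq_mul_inv,
          eq_div_iff (integratingFactor_ne_zero n k (h0 u hu) (hQ u hu))]

theorem differentiableAt_deriv_gFun (hU : IsOpen U) (hF : ∀ u ∈ U, DifferentiableAt ℝ F u)
    (hF' : ∀ u ∈ U, DifferentiableAt ℝ (deriv F) u) (hQ : ∀ u ∈ U, deriv F u ≠ 0) {u : ℝ}
    (hu : u ∈ U) (hF'' : DifferentiableAt ℝ (deriv (deriv F)) u) :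
    DifferentiableAt ℝ (deriv (gFun n F)) u := by
  have hformula : DifferentiableAt ℝ (fun x => ((n : ℝ) - 2) / ((n : ℝ) - 1) *
      ((deriv F x * deriv F x - F x * deriv (deriv F) x) / deriv F x ^ 2)) u :=
    ((((hF' u hu).mul (hF' u hu)).sub ((hF u hu).mul hF'')).div ((hF' u hu).pow 2)
      (pow_ne_zero 2 (hQ u hu))).const_mul _
  exact hformula.congr_of_eventuallyEq <| eventually_of_mem (hU.mem_nhds hu) fun x hx =>
    (hasDerivAt_gFun n (hF x hx) (hF' x hx) (hQ x hx)).deriv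

theorem ode_two_iff_exists_eq (hU : IsOpen U) (hUc : IsPreconnected U)
    (hn1 : (n : ℝ) ≠ 1) (hn2 : (n : ℝ) ≠ 2) (hf : ∀ u ∈ U, DifferentiableAt ℝ f u)
    (hF : ∀ u ∈ U, DifferentiableAt ℝ F u) (hF' : ∀ u ∈ U, DifferentiableAt ℝ (deriv F) u)
    (hF'' : ∀ u ∈ U, DifferentiableAt ℝ (deriv (deriv F)) u)
    (h0 : ∀ u ∈ U, F u ≠ 0) (hQ : ∀ u ∈ U, deriv F u ≠ 0) :
    (∀ u ∈ U, -deriv (deriv (gFun n F)) u + deriv f u * gFun n F u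
        + f u * deriv (gFun n F) u = 0) ↔
      ∃ b : ℝ, ∀ u ∈ U, f u = b * deriv F u / F u - deriv (deriv F) u / deriv F u := by
  have hc : ((n : ℝ) - 2) / ((n : ℝ) - 1) ≠ 0 :=
    div_ne_zero (sub_ne_zero.2 hn2) (sub_ne_zero.2 hn1)
  have hg : ∀ u ∈ U, DifferentiableAt ℝ (gFun n F) u := fun u hu =>
    (hasDerivAt_gFun n (hF u hu) (hF' u hu) (hQ u hu)).differentiableAt
  have hg' : ∀ u ∈ U, DifferentiableAt ℝ (deriv (gFun n F)) u := fun u hu =>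
    differentiableAt_deriv_gFun hU hF hF' hQ hu (hF'' u hu)
  have hderiv : ∀ u ∈ U, deriv (fun x => f x * gFun n F x - deriv (gFun n F) x) u =
      -deriv (deriv (gFun n F)) u + deriv f u * gFun n F u + f u * deriv (gFun n F) u :=
    fun u hu => by
      rw [deriv_fun_sub ((hf u hu).fun_mul (hg u hu)) (hg' u hu), deriv_fun_mul (hf u hu) (hg u hu)]
      ring
  have hdiff : DifferentiableOn ℝ (fun x => f x * gFun n F x - deriv (gFun n F) x) U :=
    fun u hu => (((hf u hu).fun_mul (hg u hu)).sub (hg' u hu)).differentiableWithinAt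
  calc _ ↔ ∀ u ∈ U, deriv (fun x => f x * gFun n F x - deriv (gFun n F) x) u = 0 :=
        forall₂_congr fun u hu => by rw [hderiv u hu]
    _ ↔ ∃ C, ∀ u ∈ U, f u * gFun n F u - deriv (gFun n F) u = C :=
        hU.forall_deriv_eq_zero_iff_exists_const hUc hdiff
    _ ↔ ∃ b, ∀ u ∈ U,
          f u * gFun n F u - deriv (gFun n F) u = ((n : ℝ) - 2) / ((n : ℝ) - 1) * (b - 1) :=
        ⟨fun ⟨C, hC⟩ => ⟨C / (((n : ℝ) - 2) / ((n : ℝ) - 1)) + 1, by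
          rwa [add_sub_cancel_right, mul_div_cancel₀ _ hc]⟩, fun ⟨_, hb⟩ => ⟨_, hb⟩⟩
    _ ↔ _ := exists_congr fun b => forall₂_congr fun u hu =>
        mul_gFun_sub_deriv_gFun_eq_iff hn1 hn2 (hF u hu) (hF' u hu) (h0 u hu) (hQ u hu) _ b

theorem exists_eq_mul_deriv_zpow (hU : IsPreconnected U) (hn1 : (n : ℝ) ≠ 1)
    (hf : ContinuousOn f U) (h0 : ∀ u ∈ U, f u ≠ 0)
    (hF' : ∀ u ∈ U, deriv F u = |f u| ^ ((1 : ℝ) / ((n : ℝ) - 1))) :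
    ∃ b : ℝ, ∀ u ∈ U, f u = b * deriv F u ^ ((n : ℤ) - 1) := by
  obtain ⟨b, hb⟩ := hU.exists_eq_mul_abs hf h0
  refine ⟨b, fun u hu => ?_⟩
  rw [hF' u hu, ← Real.rpow_intCast, ← Real.rpow_mul (abs_nonneg _)]
  push_cast
  rw [one_div_mul_cancel (sub_ne_zero.2 hn1), Real.rpow_one]
  exact hb u hu

end OnOpenSet

theorem stmt10 (n : ℕ) (hn : 4 ≤ n)
    (U : Set ℝ) (hU : IsOpen U) (hUc : U.OrdConnected)
    (f : ℕ → ℝ → ℝ) (hf : ∀ k ≤ n, ∀ u ∈ U, DifferentiableAt ℝ (f k) u)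
    (F : ℝ → ℝ)
    (hF₁ : ∀ u ∈ U, DifferentiableAt ℝ F u)
    (hF₂ : ∀ u ∈ U, DifferentiableAt ℝ (deriv F) u)
    (hF₃ : ∀ u ∈ U, DifferentiableAt ℝ (deriv (deriv F)) u)
    (hfn : ∀ u ∈ U, f n u ≠ 0)
    (hFne : ∀ u ∈ U, F u ≠ 0)
    (hF' : ∀ u ∈ U, deriv F u = |f n u| ^ ((1 : ℝ) / ((n : ℝ) - 1))) :
    ((∀ u ∈ U, deriv (f 0) u * gFun n F u - f 0 u * deriv (gFun n F) u + 2 * f 0 u = 0) ∧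
     (∀ u ∈ U, deriv (f 1) u * gFun n F u + f 1 u = 0) ∧
     (∀ u ∈ U, -(deriv (deriv (gFun n F)) u) + deriv (f 2) u * gFun n F u
        + f 2 u * deriv (gFun n F) u = 0) ∧
     (∀ k : ℕ, 3 ≤ k → k ≤ n - 1 → ∀ u ∈ U,
        deriv (f k) u * gFun n F u + ((k : ℝ) - 1) * f k u * deriv (gFun n F) u
          + (2 - (k : ℝ)) * f k u = 0)) ↔
      ∃ b' : ℕ → ℝ,
        (∀ k ≤ n, k ≠ 2 → ∀ u ∈ U,
          f k u = b' k * |F u| ^ ((((k : ℝ) - (n : ℝ)) / ((n : ℝ) - 2)))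
            * (deriv F u) ^ ((k : ℤ) - 1)) ∧
        (∀ u ∈ U,
          f 2 u = b' 2 * deriv F u / F u - deriv (deriv F) u / deriv F u) := by
  have hn1 : (n : ℝ) ≠ 1 := by norm_cast; omega
  have hn2 : (n : ℝ) ≠ 2 := by norm_cast; omega
  have hQ : ∀ u ∈ U, deriv F u ≠ 0 := fun u hu => by
    rw [hF' u hu]; exact (Real.rpow_pos_of_pos (abs_pos.2 (hfn u hu)) _).ne'
  have hode := fun k (hk : k ≤ n) =>
    ode_iff_exists_eq_mul k hU hUc.isPreconnected hn1 hn2 (hf k hk) hF₁ hF₂ hFne hQ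
  have hode₂ := ode_two_iff_exists_eq hU hUc.isPreconnected hn1 hn2 (hf 2 (by omega))
    hF₁ hF₂ hF₃ hFne hQ
  constructor
  · rintro ⟨hE₀, hE₁, hE₂, hE⟩
    have hb : ∀ k ≤ n, k ≠ 2 → ∃ b : ℝ, ∀ u ∈ U, f k u =
        b * |F u| ^ (((k : ℝ) - n) / ((n : ℝ) - 2)) * deriv F u ^ ((k : ℤ) - 1) := by
      intro k hk hk2
      obtain hk | rfl := hk.lt_or_eq
      · refine (hode k hk.le).1 fun u hu => ?_
        rcases k with _ | _ | _ | k
        · have := hE₀ u hu; push_cast; linarith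
        · have := hE₁ u hu; push_cast; linarith
        · exact absurd rfl hk2
        · exact hE _ (by omega) (by omega) u hu
      · simpa using exists_eq_mul_deriv_zpow hUc.isPreconnected hn1
          (fun u hu => (hf k le_rfl u hu).continuousAt.continuousWithinAt) hfn hF'
    choose! b hb using hb
    obtain ⟨b₂, hb₂⟩ := hode₂.1 hE₂
    refine ⟨Function.update b 2 b₂, fun k hk hk2 => ?_, ?_⟩
    · rw [Function.update_of_ne hk2]; exact hb k hk hk2
    · rw [Function.update_self]; exact hb₂
  · rintro ⟨b, hb, hb₂⟩
    have hE := fun k (hk : k ≤ n - 1) (hk2 : k ≠ 2) =>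
      (hode k (by omega)).2 ⟨b k, hb k (by omega) hk2⟩
    refine ⟨fun u hu => ?_, fun u hu => ?_, hode₂.2 ⟨b 2, hb₂⟩,
      fun k hk3 hk => hE k hk (by omega)⟩
    · have := hE 0 (by omega) (by omega) u hu; push_cast at this; linarith
    · have := hE 1 (by omega) (by omega) u hu; push_cast at this; linarith
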